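/- For n ≥ 2, the space of (n−1)-forms obtained by contracting ψ₊ with vectors equals ⟦λ^{n−1,0}⟧: {x ⌟ ψ₊ : x ∈ V} = ⟦λ^{n−1,0}⟧, and likewise {x ⌟ ψ₋ : x ∈ V} = ⟦λ^{n−1,0}⟧. -/

import Mathlib

noncomputable section

open scoped RealInnerProductSpace
open Function

namespace SUnPaper

variable {V : Type*} [NormedAddCommGroup V] [InnerProductSpace ℝ V]

/-- Wedge product of real-valued alternating forms. -/
def wedge {p q : ℕ} (a : V [⋀^Fin p]→ₗ[ℝ] ℝ) (b : V [⋀^Fin q]→ₗ[ℝ] ℝ) :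
    V [⋀^Fin (p + q)]→ₗ[ℝ] ℝ :=
  (((TensorProduct.lid ℝ ℝ).toLinearMap).compAlternatingMap (a.domCoprod b)).domDomCongr
    finSumFinEquiv

/-- Wedge product of complex-valued (ℝ-multilinear) alternating forms. -/
def cwedge {p q : ℕ} (a : V [⋀^Fin p]→ₗ[ℝ] ℂ) (b : V [⋀^Fin q]→ₗ[ℝ] ℂ) :
    V [⋀^Fin (p + q)]→ₗ[ℝ] ℂ :=
  ((LinearMap.mul' ℝ ℂ).compAlternatingMap (a.domCoprod b)).domDomCongr finSumFinEquiv

/-- The one-form `⟪·, x⟫` associated to a vector `x` via the metric. -/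
def oneForm (x : V) : V [⋀^Fin 1]→ₗ[ℝ] ℝ :=
  AlternatingMap.ofSubsingleton ℝ V ℝ 0 ((innerₗ V).flip x)

/-- A complex-valued one-form from an `ℝ`-linear map into `ℂ`. -/
def cOneForm (f : V →ₗ[ℝ] ℂ) : V [⋀^Fin 1]→ₗ[ℝ] ℂ :=
  AlternatingMap.ofSubsingleton ℝ V ℂ 0 f

/-- The complex one-form `x + i·y`, i.e. `w ↦ ⟪w, x⟫ + i ⟪w, y⟫`. -/
def cplxPair (x y : V) : V →ₗ[ℝ] ℂ :=
  Complex.ofRealAm.toLinearMap ∘ₗ ((innerₗ V).flip x)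
    + Complex.I • (Complex.ofRealAm.toLinearMap ∘ₗ ((innerₗ V).flip y))

/-- Iterated wedge of complex one-forms. -/
def cprod : ∀ (k : ℕ), (Fin k → (V [⋀^Fin 1]→ₗ[ℝ] ℂ)) → V [⋀^Fin k]→ₗ[ℝ] ℂ
  | 0, _ => AlternatingMap.constOfIsEmpty ℝ V (Fin 0) 1
  | (k + 1), f => cwedge (cprod k (f ∘ Fin.castSucc)) (f (Fin.last k))

/-- The complex volume form `Ψ = e₁ℂ ∧ ⋯ ∧ eₙℂ` of the SU(n)-structure determined by
`I` and the adapted basis `e₁, …, eₙ, Ie₁, …, Ieₙ`. -/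
def Psi (n : ℕ) (J : V →ₗ[ℝ] V) (e : Fin n → V) : V [⋀^Fin n]→ₗ[ℝ] ℂ :=
  cprod n fun j => cOneForm (cplxPair (e j) (J (e j)))

/-- `ψ₊ = Re (e₁ℂ ∧ ⋯ ∧ eₙℂ)`. -/
def psiP (n : ℕ) (J : V →ₗ[ℝ] V) (e : Fin n → V) : V [⋀^Fin n]→ₗ[ℝ] ℝ :=
  Complex.reLm.compAlternatingMap (Psi n J e)

/-- `ψ₋ = Im (e₁ℂ ∧ ⋯ ∧ eₙℂ)`. -/
def psiM (n : ℕ) (J : V →ₗ[ℝ] V) (e : Fin n → V) : V [⋀^Fin n]→ₗ[ℝ] ℝ :=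
  Complex.imLm.compAlternatingMap (Psi n J e)

/-- Interior product `x ⌟ b` of a `p`-form by a vector. -/
def ic : ∀ {p : ℕ}, V → (V [⋀^Fin p]→ₗ[ℝ] ℝ) → V [⋀^Fin (p - 1)]→ₗ[ℝ] ℝ
  | 0, _, _ => 0
  | (_ + 1), x, a => a.curryLeft x

/-- `k`-th power `ω^k = ω ∧ ⋯ ∧ ω`. -/
def wpow (ω : V [⋀^Fin 2]→ₗ[ℝ] ℝ) : ∀ k : ℕ, V [⋀^Fin (2 * k)]→ₗ[ℝ] ℝ
  | 0 => AlternatingMap.constOfIsEmpty ℝ V (Fin 0) 1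
  | (k + 1) => wedge (wpow ω k) ω

/-- Inner product of `p`-forms: `⟨a,c⟩ = (1/p!) Σ a(f_{i₁},…) c(f_{i₁},…)`. -/
def formInner {ι : Type*} [Fintype ι] (B : ι → V) {p : ℕ}
    (a c : V [⋀^Fin p]→ₗ[ℝ] ℝ) : ℝ :=
  (p.factorial : ℝ)⁻¹ * ∑ f : Fin p → ι, a (fun i => B (f i)) * c (fun i => B (f i))

/-- The space `⟦λ^{p,0}⟧`: real `p`-forms with `I₍ᵢ₎I₍ⱼ₎ b = -b` for all `i < j`. -/
def IsLam (J : V →ₗ[ℝ] V) {p : ℕ} (a : V [⋀^Fin p]→ₗ[ℝ] ℝ) : Prop :=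
  ∀ (v : Fin p → V) (i j : Fin p), i < j →
    a (Function.update (Function.update v i (J (v i))) j (J (v j))) = - a v

end SUnPaper

/-!
Evaluated on a tuple of vectors, `Ψ = e₁ℂ ∧ ⋯ ∧ eₙℂ` is the determinant `det (eᵢℂ(vⱼ))`, and
`eᵢℂ(I v) = i · eᵢℂ(v)`; so replacing one argument `v` of `Ψ` by `I v` multiplies `Ψ` by `i`.
Replacing two arguments of `x ⌟ Ψ` therefore multiplies it by `i² = -1`, which puts
`x ⌟ ψ₊ = Re (x ⌟ Ψ)` in `⟦λ^{n-1,0}⟧`; and `(I x) ⌟ ψ₋ = x ⌟ ψ₊`.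

Conversely, a form in `⟦λ^{n-1,0}⟧` is determined by its values on the `n` tuples
`Eⱼ = (eₖ)_{k ≠ j}` and on the same tuples with the first entry replaced by its image under `I`:
the defining relations let pairs of `I`'s cancel (up to sign) and move a single `I` to any slot,
so every tuple of basis vectors `eₖ, I eₖ` reduces, up to sign and order, to one of these.
As `x ⌟ ψ₊` takes the values `±⟪x, eⱼ⟫` and `∓⟪x, I eⱼ⟫` there, a suitable `x` matches any given
form in `⟦λ^{n-1,0}⟧`.
-/

theorem MultilinearMap.alternatization_domDomCongr {R M N ι ι' : Type*} [Semiring R]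
    [AddCommMonoid M] [Module R M] [AddCommGroup N] [Module R N]
    [Fintype ι] [DecidableEq ι] [Fintype ι'] [DecidableEq ι']
    (m : MultilinearMap R (fun _ : ι => M) N) (e : ι ≃ ι') :
    MultilinearMap.alternatization (m.domDomCongr e)
      = (MultilinearMap.alternatization m).domDomCongr e := by
  ext v
  simp only [MultilinearMap.alternatization_apply, AlternatingMap.domDomCongr_apply,
    MultilinearMap.domDomCongr_apply]
  refine Fintype.sum_equiv (e.permCongr.symm) _ _ fun σ => ?_
  simp [Equiv.Perm.sign_permCongr]

theorem Fin.exists_succAbove_comp_perm_of_injective {p : ℕ} {g : Fin p → Fin (p + 1)}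
    (hg : Injective g) : ∃ (j : Fin (p + 1)) (σ : Equiv.Perm (Fin p)), g = j.succAbove ∘ σ := by
  obtain ⟨j, hj⟩ : ∃ j, ∀ i, g i ≠ j := by
    by_contra! h
    simpa using Fintype.card_le_of_surjective g h
  choose σ hσ using fun i => Fin.exists_succAbove_eq (hj i)
  have hσ_inj : Injective σ := fun s t hst => hg (by rw [← hσ s, ← hσ t, hst])
  exact ⟨j, Equiv.ofBijective σ (Finite.injective_iff_bijective.mp hσ_inj),
    funext fun i => (hσ i).symm⟩

namespace SUnPaper

variable {V : Type*} [NormedAddCommGroup V] [InnerProductSpace ℝ V]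

theorem cprod_cOneForm_eq_alternatization {k : ℕ} (g : Fin k → V →ₗ[ℝ] ℂ) :
    cprod k (fun i => cOneForm (g i)) =
      MultilinearMap.alternatization
        ((MultilinearMap.mkPiAlgebra ℝ (Fin k) ℂ).compLinearMap g) := by
  induction k with
  | zero =>
    ext v
    simp [cprod, MultilinearMap.alternatization_apply]
  | succ k ih =>
    have hlast : cOneForm (g (Fin.last k)) = MultilinearMap.alternatization
        ((MultilinearMap.mkPiAlgebra ℝ (Fin 1) ℂ).compLinearMap fun _ => g (Fin.last k)) := by
      ext v
      simp [cOneForm, MultilinearMap.alternatization_apply]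
    rw [cprod, cwedge, comp_def, ih, hlast, ← MultilinearMap.domCoprod_alternization,
      ← LinearMap.compMultilinearMap_alternatization, ← MultilinearMap.alternatization_domDomCongr]
    congr 1
    ext v
    simp only [LinearMap.compMultilinearMap_apply, MultilinearMap.domDomCongr_apply,
      MultilinearMap.domCoprod_apply, MultilinearMap.compLinearMap_apply,
      MultilinearMap.mkPiAlgebra_apply, Finset.univ_unique, Finset.prod_singleton,
      LinearMap.mul'_apply, Fin.prod_univ_castSucc]
    rfl

theorem cprod_cOneForm_apply {k : ℕ} (g : Fin k → V →ₗ[ℝ] ℂ) (v : Fin k → V) :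
    cprod k (fun i => cOneForm (g i)) v = (Matrix.of fun i j => g i (v j)).det := by
  rw [cprod_cOneForm_eq_alternatization, MultilinearMap.alternatization_apply,
    ← Matrix.det_transpose, Matrix.det_apply]
  simp

theorem Psi_apply (n : ℕ) (J : V →ₗ[ℝ] V) (e v : Fin n → V) :
    Psi n J e v = (Matrix.of fun i j => cplxPair (e i) (J (e i)) (v j)).det :=
  cprod_cOneForm_apply _ v

theorem cplxPair_apply (x y w : V) :
    cplxPair x y w = (⟪w, x⟫ : ℂ) + Complex.I * (⟪w, y⟫ : ℂ) := by
  simp [cplxPair, real_inner_comm]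

section ComplexStructure
variable {J : V →ₗ[ℝ] V} (hJ : ∀ v : V, J (J v) = -v) (hJorth : ∀ v w : V, ⟪J v, J w⟫ = ⟪v, w⟫)
include hJ hJorth

theorem inner_apply_left_eq_neg_inner_apply_right (v w : V) : ⟪J v, w⟫ = -⟪v, J w⟫ := by
  have h := hJorth v (J w)
  rw [hJ, inner_neg_right] at h
  linarith

theorem cplxPair_apply_J (x w : V) : cplxPair x (J x) (J w) = Complex.I * cplxPair x (J x) w := by
  rw [cplxPair_apply, cplxPair_apply, hJorth, inner_apply_left_eq_neg_inner_apply_right hJ hJorth]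
  push_cast
  ring_nf
  rw [Complex.I_sq]
  ring

theorem Psi_update_J (n : ℕ) (e v : Fin n → V) (s : Fin n) :
    Psi n J e (update v s (J (v s))) = Complex.I * Psi n J e v := by
  set M : Matrix (Fin n) (Fin n) ℂ := Matrix.of fun i j => cplxPair (e i) (J (e i)) (v j)
  have hM : (Matrix.of fun i j => cplxPair (e i) (J (e i)) (update v s (J (v s)) j)) =
      M.updateCol s (Complex.I • fun i => M i s) := by
    ext i j
    rcases eq_or_ne j s with rfl | hj
    · simp [M, cplxPair_apply_J hJ hJorth]
    · simp [M, hj]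
  rw [Psi_apply, Psi_apply, hM, Matrix.det_updateCol_smul, Matrix.updateCol_eq_self]

end ComplexStructure

theorem Psi_update_basis {J : V →ₗ[ℝ] V} {n : ℕ} (bas : OrthonormalBasis (Fin n ⊕ Fin n) ℝ V)
    (hbas : ∀ j, bas (Sum.inr j) = J (bas (Sum.inl j))) (j : Fin n) (x : V) :
    Psi n J (fun l => bas (Sum.inl l)) (update (fun l => bas (Sum.inl l)) j x) =
      ⟪x, bas (Sum.inl j)⟫ + Complex.I * ⟪x, J (bas (Sum.inl j))⟫ := by
  set c : Fin n → ℂ := fun i => cplxPair (bas (Sum.inl i)) (J (bas (Sum.inl i))) x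
  have hM : (Matrix.of fun i k => cplxPair (bas (Sum.inl i)) (J (bas (Sum.inl i)))
      (update (fun l => bas (Sum.inl l)) j x k)) =
        (1 : Matrix (Fin n) (Fin n) ℂ).updateCol j c := by
    ext i k
    rcases eq_or_ne k j with rfl | hk
    · simp [c]
    · simp [hk, cplxPair_apply, ← hbas, bas.inner_eq_ite, Matrix.one_apply, eq_comm,
        apply_ite ((↑) : ℝ → ℂ)]
  have hdet := Matrix.det_updateCol_sum (1 : Matrix (Fin n) (Fin n) ℂ) j c
  simp only [Matrix.one_apply, smul_eq_mul, mul_ite, mul_one, mul_zero,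
    Finset.sum_ite_eq, Finset.mem_univ, if_true, Matrix.det_one] at hdet
  rw [Psi_apply, hM, hdet]
  simp [c, cplxPair_apply]

section IsLam
variable {J : V →ₗ[ℝ] V} {p : ℕ} {d : V [⋀^Fin p]→ₗ[ℝ] ℝ}

theorem IsLam.sub {d' : V [⋀^Fin p]→ₗ[ℝ] ℝ} (hd : IsLam J d) (hd' : IsLam J d') :
    IsLam J (d - d') := fun v i j hij => by
  simp only [AlternatingMap.sub_apply, hd v i j hij, hd' v i j hij, neg_sub_neg, neg_sub]

theorem IsLam.apply_update_update_of_ne (hd : IsLam J d) (v : Fin p → V) {i j : Fin p}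
    (hij : i ≠ j) : d (update (update v i (J (v i))) j (J (v j))) = -d v := by
  rcases hij.lt_or_gt with h | h
  · exact hd v i j h
  · rw [update_comm hij]
    exact hd v j i h

theorem IsLam.apply_update_J_eq (hJ : ∀ v : V, J (J v) = -v) (hd : IsLam J d) (v : Fin p → V)
    (i k : Fin p) : d (update v i (J (v i))) = d (update v k (J (v k))) := by
  rcases eq_or_ne i k with rfl | hik
  · rfl
  have h := hd.apply_update_update_of_ne (update v k (J (v k))) hik
  rw [update_of_ne hik, update_self, hJ, update_comm hik, update_idem, update_comm hik.symm,
    d.map_update_neg, update_eq_self_iff.mpr (update_of_ne hik.symm _ _).symm] at h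
  exact neg_injective h

/-- A twist of `w` replaces one entry `w i` by `J (w i)`. -/
def VanishesOnTwists (J : V →ₗ[ℝ] V) (d : V [⋀^Fin p]→ₗ[ℝ] ℝ) (w : Fin p → V) : Prop :=
  d w = 0 ∧ ∀ i, d (update w i (J (w i))) = 0

theorem VanishesOnTwists.comp_perm {w : Fin p → V} (hw : VanishesOnTwists J d w)
    (σ : Equiv.Perm (Fin p)) : VanishesOnTwists J d (w ∘ σ) := by
  refine ⟨by rw [d.map_perm, hw.1, smul_zero], fun i => ?_⟩
  rw [comp_apply, ← σ.symm_apply_apply i, ← update_comp_equiv, σ.apply_symm_apply, d.map_perm,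
    hw.2, smul_zero]

variable (hJ : ∀ v : V, J (J v) = -v) (hd : IsLam J d)
include hJ hd

theorem VanishesOnTwists.update {w : Fin p → V} (hw : VanishesOnTwists J d w) (a : Fin p) :
    VanishesOnTwists J d (update w a (J (w a))) := by
  refine ⟨hw.2 a, fun i => ?_⟩
  rcases eq_or_ne i a with rfl | hia
  · rw [update_self, update_idem, hJ, d.map_update_neg, update_eq_self, hw.1, neg_zero]
  · rw [update_of_ne hia, hd.apply_update_update_of_ne w hia.symm, hw.1, neg_zero]

theorem VanishesOnTwists.twist {w : Fin p → V} (hw : VanishesOnTwists J d w)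
    (S : Finset (Fin p)) :
    VanishesOnTwists J d (fun k => if k ∈ S then J (w k) else w k) := by
  classical
  induction S using Finset.induction_on with
  | empty => simpa using hw
  | insert a S ha ih =>
    convert ih.update hJ hd a using 1
    funext k
    rcases eq_or_ne k a with rfl | hka <;> simp [*]

theorem vanishesOnTwists_of_eq {w : Fin p → V} {s t : Fin p} (hst : w s = w t) (hne : s ≠ t) :
    VanishesOnTwists J d w := by
  have hswap : update w t (J (w t)) = update w s (J (w s)) ∘ Equiv.swap s t := by
    rw [update_comp_equiv, Equiv.symm_swap, Equiv.swap_apply_left, hst]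
    congr 1
    funext k
    rcases eq_or_ne k s with rfl | hks
    · simp [hst]
    rcases eq_or_ne k t with rfl | hkt
    · simp [hst]
    simp [Equiv.swap_apply_of_ne_of_ne hks hkt]
  have hs : d (update w s (J (w s))) = 0 := by
    have h := hd.apply_update_J_eq hJ w s t
    rw [hswap, d.map_swap _ hne] at h
    linarith
  exact ⟨d.map_eq_zero_of_eq w hst hne, fun i => (hd.apply_update_J_eq hJ w i s).trans hs⟩

end IsLam

theorem IsLam.eq_zero_of_apply_removeNth {J : V →ₗ[ℝ] V} {p : ℕ} {d : V [⋀^Fin (p + 1)]→ₗ[ℝ] ℝ}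
    (hJ : ∀ v : V, J (J v) = -v) (hd : IsLam J d)
    (bas : Module.Basis (Fin (p + 2) ⊕ Fin (p + 2)) ℝ V)
    (hbas : ∀ j, bas (Sum.inr j) = J (bas (Sum.inl j)))
    (h₀ : ∀ j : Fin (p + 2), d (j.removeNth fun l => bas (Sum.inl l)) = 0)
    (h₁ : ∀ j : Fin (p + 2), d (update (j.removeNth fun l => bas (Sum.inl l)) 0
      (J (j.removeNth (fun l => bas (Sum.inl l)) 0))) = 0) :
    d = 0 := by
  classical
  set e : Fin (p + 2) → V := fun l => bas (Sum.inl l)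
  have hE : ∀ j : Fin (p + 2), VanishesOnTwists J d (j.removeNth e) := fun j =>
    ⟨h₀ j, fun i => (hd.apply_update_J_eq hJ _ i 0).trans (h₁ j)⟩
  have hbase : ∀ g₀ : Fin (p + 1) → Fin (p + 2), VanishesOnTwists J d (e ∘ g₀) := by
    intro g₀
    by_cases hg : Injective g₀
    · obtain ⟨j, σ, rfl⟩ := Fin.exists_succAbove_comp_perm_of_injective hg
      exact (hE j).comp_perm σ
    · obtain ⟨s, t, hst, hne⟩ := not_injective_iff.mp hg
      exact vanishesOnTwists_of_eq hJ hd (congrArg e hst) hne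
  refine AlternatingMap.coe_multilinearMap_injective
    (Module.Basis.ext_multilinear (fun _ => bas) fun g => ?_)
  set g₀ : Fin (p + 1) → Fin (p + 2) := fun k => Sum.elim id id (g k)
  set S := Finset.univ.filter fun k => (g k).isRight
  have htwist : (fun k => bas (g k)) = fun k => if k ∈ S then J ((e ∘ g₀) k) else (e ∘ g₀) k := by
    funext k
    cases hgk : g k <;> simp [S, e, g₀, hgk, hbas]
  simpa [htwist] using ((hbase g₀).twist hJ hd S).1

section Contraction
variable {J : V →ₗ[ℝ] V} {p : ℕ}

theorem curryLeft_psiP_apply (e : Fin (p + 1) → V) (x : V) (v : Fin p → V) :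
    (psiP (p + 1) J e).curryLeft x v = ((Psi (p + 1) J e).curryLeft x v).re := rfl

theorem Psi_curryLeft_removeNth (bas : OrthonormalBasis (Fin (p + 1) ⊕ Fin (p + 1)) ℝ V)
    (hbas : ∀ j, bas (Sum.inr j) = J (bas (Sum.inl j))) (x : V) (j : Fin (p + 1)) :
    (Psi (p + 1) J fun l => bas (Sum.inl l)).curryLeft x (j.removeNth fun l => bas (Sum.inl l)) =
      (↑((-1 : ℝ) ^ (j : ℕ)) : ℂ) *
        (⟪x, bas (Sum.inl j)⟫ + Complex.I * ⟪x, J (bas (Sum.inl j))⟫) := by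
  rw [AlternatingMap.curryLeft_apply_apply, ← AlternatingMap.neg_one_pow_smul_map_insertNth,
    Fin.insertNth_removeNth, Psi_update_basis bas hbas]
  simp [mul_add]

variable (hJ : ∀ v : V, J (J v) = -v) (hJorth : ∀ v w : V, ⟪J v, J w⟫ = ⟪v, w⟫)
include hJ hJorth

theorem Psi_curryLeft_update_J (e : Fin (p + 1) → V) (x : V) (v : Fin p → V) (i : Fin p) :
    (Psi (p + 1) J e).curryLeft x (update v i (J (v i))) =
      Complex.I * (Psi (p + 1) J e).curryLeft x v := by
  simp only [AlternatingMap.curryLeft_apply_apply, Matrix.vecCons, Fin.cons_update]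
  rw [← Psi_update_J hJ hJorth, Fin.cons_succ]

theorem isLam_curryLeft_psiP (e : Fin (p + 1) → V) (x : V) :
    IsLam J ((psiP (p + 1) J e).curryLeft x) := by
  intro v i j hij
  have hvj : v j = update v i (J (v i)) j := (update_of_ne hij.ne' _ _).symm
  rw [curryLeft_psiP_apply, curryLeft_psiP_apply, hvj, Psi_curryLeft_update_J hJ hJorth,
    Psi_curryLeft_update_J hJ hJorth, ← mul_assoc, Complex.I_mul_I, neg_one_mul, Complex.neg_re]

theorem curryLeft_psiM_J (e : Fin (p + 1) → V) (x : V) :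
    (psiM (p + 1) J e).curryLeft (J x) = (psiP (p + 1) J e).curryLeft x := by
  ext v
  have hcons : (Matrix.vecCons (J x) v : Fin (p + 1) → V) =
      update (Matrix.vecCons x v) 0 (J (Matrix.vecCons x v 0)) := by
    simp [Matrix.vecCons, Fin.update_cons_zero]
  simp only [AlternatingMap.curryLeft_apply_apply, psiM, psiP, LinearMap.compAlternatingMap_apply,
    Complex.imLm_coe, Complex.reLm_coe]
  rw [hcons, Psi_update_J hJ hJorth, Complex.mul_im, Complex.I_re, Complex.I_im]
  simp

theorem exists_curryLeft_psiP_eq (bas : OrthonormalBasis (Fin (p + 2) ⊕ Fin (p + 2)) ℝ V)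
    (hbas : ∀ j, bas (Sum.inr j) = J (bas (Sum.inl j)))
    {b : V [⋀^Fin (p + 1)]→ₗ[ℝ] ℝ} (hb : IsLam J b) :
    ∃ x, (psiP (p + 2) J fun l => bas (Sum.inl l)).curryLeft x = b := by
  let E : Fin (p + 2) → Fin (p + 1) → V := fun j => j.removeNth fun l => bas (Sum.inl l)
  -- `x ⌟ ψ₊` takes the value `(-1)^j ⟪x, eⱼ⟫` at `E j` and `-(-1)^j ⟪x, J eⱼ⟫` at its twist
  let c : Fin (p + 2) ⊕ Fin (p + 2) → ℝ := Sum.elim (fun j => (-1) ^ (j : ℕ) * b (E j))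
    fun j => -((-1) ^ (j : ℕ) * b (update (E j) 0 (J (E j 0))))
  let x : V := bas.repr.symm (WithLp.toLp 2 c)
  have hx : ∀ i, ⟪x, bas i⟫ = c i := fun i => by
    rw [real_inner_comm, ← bas.repr_apply_apply, LinearIsometryEquiv.apply_symm_apply]
  have hsign : ∀ j : Fin (p + 2), ((-1 : ℝ) ^ (j : ℕ)) * (-1) ^ (j : ℕ) = 1 := fun j => by
    rw [← mul_pow, neg_one_mul, neg_neg, one_pow]
  refine ⟨x, sub_eq_zero.mp <| ((isLam_curryLeft_psiP hJ hJorth _ x).sub hb)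
    |>.eq_zero_of_apply_removeNth hJ bas.toBasis (by simpa using hbas) (fun j => ?_) (fun j => ?_)⟩
  · simp only [OrthonormalBasis.coe_toBasis, AlternatingMap.sub_apply, curryLeft_psiP_apply]
    rw [Psi_curryLeft_removeNth bas hbas, ← hbas, hx, hx, Complex.re_ofReal_mul]
    simp only [Complex.add_re, Complex.mul_re, Complex.ofReal_re, Complex.ofReal_im, Complex.I_re,
      Complex.I_im, c, Sum.elim_inl, Sum.elim_inr]
    linear_combination b (E j) * hsign j
  · simp only [OrthonormalBasis.coe_toBasis, AlternatingMap.sub_apply, curryLeft_psiP_apply]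
    rw [Psi_curryLeft_update_J hJ hJorth, Psi_curryLeft_removeNth bas hbas, ← hbas, hx, hx,
      mul_left_comm, Complex.re_ofReal_mul]
    simp only [Complex.add_re, Complex.mul_re, Complex.ofReal_re, Complex.ofReal_im, Complex.I_re,
      Complex.I_im, Complex.add_im, Complex.mul_im, c, Sum.elim_inl, Sum.elim_inr]
    linear_combination b (update (E j) 0 (J (E j 0))) * hsign j

end Contraction

theorem contractions_of_psi_general
{V : Type*} [NormedAddCommGroup V] [InnerProductSpace ℝ V]
    (n : ℕ)
    (J : V →ₗ[ℝ] V) (hJ : ∀ v : V, J (J v) = -v)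
    (hJorth : ∀ v w : V, ⟪J v, J w⟫ = ⟪v, w⟫)
    (bas : OrthonormalBasis (Fin n ⊕ Fin n) ℝ V)
    (hbas : ∀ j : Fin n, bas (Sum.inr j) = J (bas (Sum.inl j)))
    (ψp ψm : V [⋀^Fin n]→ₗ[ℝ] ℝ)
    (hψp : ψp = psiP n J (fun j => bas (Sum.inl j)))
    (hψm : ψm = psiM n J (fun j => bas (Sum.inl j)))
    (hn : 2 ≤ n) :
    ({c : V [⋀^Fin (n - 1)]→ₗ[ℝ] ℝ | ∃ x : V, c = ic x ψp} = {c | IsLam J c})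
      ∧ ({c : V [⋀^Fin (n - 1)]→ₗ[ℝ] ℝ | ∃ x : V, c = ic x ψm} = {c | IsLam J c}) := by
  obtain ⟨p, rfl⟩ : ∃ p, n = p + 2 := ⟨n - 2, by omega⟩
  subst hψp hψm
  have hP : ∀ c, (∃ x : V, c = ic x (psiP (p + 2) J fun j => bas (Sum.inl j))) ↔ IsLam J c :=
    fun c => ⟨fun ⟨x, hx⟩ => hx ▸ isLam_curryLeft_psiP hJ hJorth _ x,
      fun hc => (exists_curryLeft_psiP_eq hJ hJorth bas hbas hc).imp fun _ => Eq.symm⟩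
  have hM : ∀ x, ic (J x) (psiM (p + 2) J fun j => bas (Sum.inl j)) =
      ic x (psiP (p + 2) J fun j => bas (Sum.inl j)) := curryLeft_psiM_J hJ hJorth _
  have hJ_surj : Surjective J := fun y => ⟨-J y, by rw [map_neg, hJ, neg_neg]⟩
  refine ⟨Set.ext hP, Set.ext fun c => hJ_surj.exists.trans ?_⟩
  simp only [hM]
  exact hP c

/-- for n ≥ 2, {x ⌟ ψ₊ : x ∈ V} = ⟦λ^{n−1,0}⟧ = {x ⌟ ψ₋ : x ∈ V}. -/
theorem contractions_of_psi
{V : Type*} [NormedAddCommGroup V] [InnerProductSpace ℝ V]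
    [FiniteDimensional ℝ V] (n : ℕ) (hdim : Module.finrank ℝ V = 2 * n)
    (J : V →ₗ[ℝ] V) (hJ : ∀ v : V, J (J v) = -v)
    (hJorth : ∀ v w : V, ⟪J v, J w⟫ = ⟪v, w⟫)
    (bas : OrthonormalBasis (Fin n ⊕ Fin n) ℝ V)
    (hbas : ∀ j : Fin n, bas (Sum.inr j) = J (bas (Sum.inl j)))
    (ω : V [⋀^Fin 2]→ₗ[ℝ] ℝ) (hω : ∀ x y : V, ω ![x, y] = ⟪x, J y⟫)
    (ψp ψm : V [⋀^Fin n]→ₗ[ℝ] ℝ)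
    (hψp : ψp = psiP n J (fun j => bas (Sum.inl j)))
    (hψm : ψm = psiM n J (fun j => bas (Sum.inl j)))
    (hn : 2 ≤ n) :
    ({c : V [⋀^Fin (n - 1)]→ₗ[ℝ] ℝ | ∃ x : V, c = ic x ψp} = {c | IsLam J c})
      ∧ ({c : V [⋀^Fin (n - 1)]→ₗ[ℝ] ℝ | ∃ x : V, c = ic x ψm} = {c | IsLam J c}) :=
  contractions_of_psi_general n J hJ hJorth bas hbas ψp ψm hψp hψm hn

end SUnPaper
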